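/- With the notation of the context, for every particle array v ∈ Z^{T·M} and every index path k ∈ {1,…,M}^T one has G_θ(v^{(𝟏)}) · Φ_{θ,ϑ}(v) · b^{ref}_{θ,ϑ}(k | v) = G_θ((s_{1,k}(v))^{(𝟏)}) · Φ_{θ,ϑ}(s_{1,k}(v)) · b^{ref}_{θ,ϑ}(k | s_{1,k}(v)); that is, the joint density of a target-distributed path together with importance-sampled companion particles, multiplied by the refreshment selection probability, is invariant under swapping the conditioned path v^{(𝟏)} with the selected path v^{(k)}. -/

import Mathlib

open MeasureTheory Finset

namespace MHAARRB9

variable {Z : Type*}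

/-- The path `v^{(k)}` extracted from the particle array `v`. -/
def pathOf (n m : ℕ) (v : Fin (n + 1) → Fin (m + 1) → Z)
    (k : Fin (n + 1) → Fin (m + 1)) : Fin (n + 1) → Z := fun t => v t (k t)

/-- The constant index path `𝟏`. -/
def onePath (n m : ℕ) : Fin (n + 1) → Fin (m + 1) := fun _ => 0

/-- The swap operator `s_{1,k}`. -/
def swapArr (n m : ℕ) (k : Fin (n + 1) → Fin (m + 1))
    (v : Fin (n + 1) → Fin (m + 1) → Z) : Fin (n + 1) → Fin (m + 1) → Z :=
  fun t i => v t (Equiv.swap 0 (k t) i)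

/-- `G_θ(z) = ∏_t γ_{t,θ}(z_t)`. -/
noncomputable def G (n : ℕ) (γ : Fin (n + 1) → Z → ℝ) (z : Fin (n + 1) → Z) : ℝ :=
  ∏ t, γ t (z t)

/-- The proposal density `Φ_{θ,ϑ}(v) = ∏_t ∏_{i≥2} q_{t,θ,ϑ}(v_t^{(i)})`. -/
noncomputable def Phi (n m : ℕ) (qp : Fin (n + 1) → Z → ℝ)
    (v : Fin (n + 1) → Fin (m + 1) → Z) : ℝ :=
  ∏ t, ∏ i ∈ univ.erase (0 : Fin (m + 1)), qp t (v t i)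

/-- The refreshment selection probabilities `b^{ref}_{θ,ϑ}(k|v)`. -/
noncomputable def bRef (n m : ℕ) (γ qp : Fin (n + 1) → Z → ℝ)
    (k : Fin (n + 1) → Fin (m + 1)) (v : Fin (n + 1) → Fin (m + 1) → Z) : ℝ :=
  ∏ t, (γ t (v t (k t)) / qp t (v t (k t))) / (∑ i, γ t (v t i) / qp t (v t i))

/-- Up to the common factor `∏ i, q (f i) / S`, both sides equal `w (f a) * w (f c)` with
`w = γ / q`, which is symmetric in `a` and `c`. -/
lemma mul_prod_erase_mul_ratio_comp_swap {ι α K : Type*} [Fintype ι] [DecidableEq ι] [Field K]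
    (γ q : α → K) (hq : ∀ x, q x ≠ 0) (f : ι → α) (a c : ι) :
    γ (f a) * (∏ i ∈ univ.erase a, q (f i)) *
        (γ (f c) / q (f c) / ∑ i, γ (f i) / q (f i))
      = γ (f (Equiv.swap a c a)) * (∏ i ∈ univ.erase a, q (f (Equiv.swap a c i))) *
        (γ (f (Equiv.swap a c c)) / q (f (Equiv.swap a c c)) /
          ∑ i, γ (f (Equiv.swap a c i)) / q (f (Equiv.swap a c i))) := by
  have factor : ∀ g : ι → α,
      γ (g a) * (∏ i ∈ univ.erase a, q (g i)) * (γ (g c) / q (g c) / ∑ i, γ (g i) / q (g i))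
        = γ (g a) / q (g a) * (γ (g c) / q (g c)) * (∏ i, q (g i)) /
            ∑ i, γ (g i) / q (g i) := fun g => by
    rw [← mul_prod_erase univ (fun i => q (g i)) (mem_univ a)]
    field_simp [hq (g a)]
  rw [factor f]
  refine Eq.trans ?_ (factor (f ∘ Equiv.swap a c)).symm
  simp only [Function.comp_apply, Equiv.swap_apply_left, Equiv.swap_apply_right,
    Equiv.prod_comp (Equiv.swap a c) (fun i => q (f i)),
    Equiv.sum_comp (Equiv.swap a c) (fun i => γ (f i) / q (f i))]
  ring

theorem refreshment_swap_invariance_general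
    (n m : ℕ)
    (γθ qp : Fin (n + 1) → Z → ℝ)
    (hqp : ∀ t z, 0 < qp t z)
    (v : Fin (n + 1) → Fin (m + 1) → Z) (k : Fin (n + 1) → Fin (m + 1)) :
    G n γθ (pathOf n m v (onePath n m)) * Phi n m qp v * bRef n m γθ qp k v
      = G n γθ (pathOf n m (swapArr n m k v) (onePath n m)) *
          Phi n m qp (swapArr n m k v) * bRef n m γθ qp k (swapArr n m k v) := by
  unfold G Phi bRef pathOf onePath swapArr
  simp only [← prod_mul_distrib]
  exact prod_congr rfl fun t _ =>
    mul_prod_erase_mul_ratio_comp_swap (γθ t) (qp t) (fun z => (hqp t z).ne') (v t) 0 (k t)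

/-- For every particle array `v` and index path `k`,
`G_θ(v^{(𝟏)}) Φ_{θ,ϑ}(v) b^{ref}_{θ,ϑ}(k|v)
  = G_θ((s_{1,k}(v))^{(𝟏)}) Φ_{θ,ϑ}(s_{1,k}(v)) b^{ref}_{θ,ϑ}(k|s_{1,k}(v))`. -/
theorem refreshment_swap_invariance
    [MeasurableSpace Z] (n m : ℕ)
    (γθ qp : Fin (n + 1) → Z → ℝ)
    (hγθm : ∀ t, Measurable (γθ t)) (hqpm : ∀ t, Measurable (qp t))
    (hγθ : ∀ t z, 0 < γθ t z) (hqp : ∀ t z, 0 < qp t z)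
    (v : Fin (n + 1) → Fin (m + 1) → Z) (k : Fin (n + 1) → Fin (m + 1)) :
    G n γθ (pathOf n m v (onePath n m)) * Phi n m qp v * bRef n m γθ qp k v
      = G n γθ (pathOf n m (swapArr n m k v) (onePath n m)) *
          Phi n m qp (swapArr n m k v) * bRef n m γθ qp k (swapArr n m k v) :=
  refreshment_swap_invariance_general n m γθ qp hqp v k

end MHAARRB9
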